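/- arXiv:1408.5848 — 4 statements merged into one kernel-verified Lean document; each statement's English description precedes it below -/
import Mathlib

section
/- The manifold (G,φ,ξ,η,g) belongs to class F₇: the tensor F(x,y,z)=g((∇ₓφ)y,z) satisfies F(x,y,z)=F(x,y,ξ)η(z)+F(x,z,ξ)η(y) and F(x,y,ξ)=-F(y,x,ξ)=-F(φx,φy,ξ) for all x,y,z in the span of e₁,...,e₅. -/
noncomputable section

open Finset

/-- The underlying 5-dimensional real vector space. -/
abbrev V5 := Fin 5 → ℝ

/-- The basis vectors e₁,…,e₅ (0-indexed). -/
def bv (i : Fin 5) : V5 := fun j => if j = i then 1 else 0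

/-- The B-metric g, diagonal (1,1,-1,-1,1). -/
def gB (x y : V5) : ℝ := x 0 * y 0 + x 1 * y 1 - x 2 * y 2 - x 3 * y 3 + x 4 * y 4

/-- The matrix of g in the basis. -/
def gmat (i j : Fin 5) : ℝ := gB (bv i) (bv j)

/-- The inverse matrix of g (g is diagonal with entries ±1, hence self-inverse). -/
def ginv (i j : Fin 5) : ℝ := gB (bv i) (bv j)

/-- The structure endomorphism φ: φe₁=e₃, φe₂=e₄, φe₃=-e₁, φe₄=-e₂, φe₅=0. -/
def phiV (x : V5) : V5 := ![-(x 2), -(x 3), x 0, x 1, 0]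

/-- The 1-form η, η(eᵢ)=δᵢ₅. -/
def etaV (x : V5) : ℝ := x 4

/-- The Reeb vector field ξ = e₅. -/
def xiV : V5 := bv 4

/-- Bilinear coefficient for the bracket directions [e₁,e₂]=-[e₃,e₄]. -/
def brA (x y : V5) : ℝ := x 0 * y 1 - x 1 * y 0 - (x 2 * y 3 - x 3 * y 2)

/-- Bilinear coefficient for the bracket directions [e₁,e₄]=-[e₂,e₃]. -/
def brB (x y : V5) : ℝ := x 0 * y 3 - x 3 * y 0 - (x 1 * y 2 - x 2 * y 1)

/-- The Lie bracket of the 5-dimensional Lie algebra of the example: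
[e₁,e₂]=-[e₃,e₄]=-λ₁e₁-λ₂e₂+λ₃e₃+λ₄e₄+2μ₁e₅,
[e₁,e₄]=-[e₂,e₃]=-λ₃e₁-λ₄e₂-λ₁e₃-λ₂e₄+2μ₂e₅, other brackets zero. -/
def brk (l1 l2 l3 l4 m1 m2 : ℝ) (x y : V5) : V5 :=
  fun k => brA x y * (![-l1, -l2, l3, l4, 2*m1] k) + brB x y * (![-l3, -l4, -l1, -l2, 2*m2] k)

/-- Basis components ∇_{eᵢ}e_j of the Levi-Civita connection of the example. -/
def nablaTbl (l1 l2 l3 l4 m1 m2 : ℝ) : Fin 5 → Fin 5 → V5 :=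
  ![![![0,l1,0,-l3,0], ![-l1,0,l3,0,m1], ![0,l3,0,l1,0], ![-l3,0,-l1,0,m2], ![0,-m1,0,m2,0]],
    ![![0,l2,0,-l4,-m1], ![-l2,0,l4,0,0], ![0,l4,0,l2,-m2], ![-l4,0,-l2,0,0], ![m1,0,-m2,0,0]],
    ![![0,l3,0,l1,0], ![-l3,0,-l1,0,m2], ![0,-l1,0,l3,0], ![l1,0,-l3,0,-m1], ![0,-m2,0,-m1,0]],
    ![![0,l4,0,l2,-m2], ![-l4,0,-l2,0,0], ![0,-l2,0,l4,m1], ![l2,0,-l4,0,0], ![m2,0,m1,0,0]],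
    ![![0,-m1,0,m2,0], ![m1,0,-m2,0,0], ![0,-m2,0,-m1,0], ![m2,0,m1,0,0], ![0,0,0,0,0]]]

/-- Basis components D̈_{eᵢ}e_j of the φKT-connection of the example. -/
def ktTbl (l1 l2 l3 l4 m1 m2 : ℝ) : Fin 5 → Fin 5 → V5 :=
  ![![![0,l1,0,-l3,0], ![-l1,0,l3,0,0], ![0,l3,0,l1,0], ![-l3,0,-l1,0,0], ![0,0,0,0,0]],
    ![![0,l2,0,-l4,0], ![-l2,0,l4,0,0], ![0,l4,0,l2,0], ![-l4,0,-l2,0,0], ![0,0,0,0,0]],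
    ![![0,l3,0,l1,0], ![-l3,0,-l1,0,0], ![0,-l1,0,l3,0], ![l1,0,-l3,0,0], ![0,0,0,0,0]],
    ![![0,l4,0,l2,0], ![-l4,0,-l2,0,0], ![0,-l2,0,l4,0], ![l2,0,-l4,0,0], ![0,0,0,0,0]],
    ![![0,-2*m1,0,2*m2,0], ![2*m1,0,-2*m2,0,0], ![0,-2*m2,0,-2*m1,0], ![2*m2,0,2*m1,0,0], ![0,0,0,0,0]]]

/-- Basis components Ḋ_{eᵢ}e_j of the φB-connection of the example. -/
def bTbl (l1 l2 l3 l4 m1 m2 : ℝ) : Fin 5 → Fin 5 → V5 :=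
  ![![![0,l1,0,-l3,0], ![-l1,0,l3,0,0], ![0,l3,0,l1,0], ![-l3,0,-l1,0,0], ![0,0,0,0,0]],
    ![![0,l2,0,-l4,0], ![-l2,0,l4,0,0], ![0,l4,0,l2,0], ![-l4,0,-l2,0,0], ![0,0,0,0,0]],
    ![![0,l3,0,l1,0], ![-l3,0,-l1,0,0], ![0,-l1,0,l3,0], ![l1,0,-l3,0,0], ![0,0,0,0,0]],
    ![![0,l4,0,l2,0], ![-l4,0,-l2,0,0], ![0,-l2,0,l4,0], ![l2,0,-l4,0,0], ![0,0,0,0,0]],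
    ![![0,-m1,0,m2,0], ![m1,0,-m2,0,0], ![0,-m2,0,-m1,0], ![m2,0,m1,0,0], ![0,0,0,0,0]]]

/-- Basis components D⃛_{eᵢ}e_j of the φ-canonical connection of the example. -/
def cTbl (l1 l2 l3 l4 m1 m2 : ℝ) : Fin 5 → Fin 5 → V5 :=
  ![![![0,l1,0,-l3,0], ![-l1,0,l3,0,0], ![0,l3,0,l1,0], ![-l3,0,-l1,0,0], ![0,0,0,0,0]],
    ![![0,l2,0,-l4,0], ![-l2,0,l4,0,0], ![0,l4,0,l2,0], ![-l4,0,-l2,0,0], ![0,0,0,0,0]],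
    ![![0,l3,0,l1,0], ![-l3,0,-l1,0,0], ![0,-l1,0,l3,0], ![l1,0,-l3,0,0], ![0,0,0,0,0]],
    ![![0,l4,0,l2,0], ![-l4,0,-l2,0,0], ![0,-l2,0,l4,0], ![l2,0,-l4,0,0], ![0,0,0,0,0]],
    ![![0,0,0,0,0], ![0,0,0,0,0], ![0,0,0,0,0], ![0,0,0,0,0], ![0,0,0,0,0]]]

/-- Bilinear extension of a connection table to arbitrary (constant-coefficient) vectors. -/
def ext (T : Fin 5 → Fin 5 → V5) (x y : V5) : V5 :=
  fun k => ∑ i, ∑ j, x i * y j * T i j k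

/-- Torsion components T(eᵢ,e_j,e_k) = g(D_{eᵢ}e_j - D_{e_j}eᵢ - [eᵢ,e_j], e_k). -/
def torC (l1 l2 l3 l4 m1 m2 : ℝ) (T : Fin 5 → Fin 5 → V5) (i j k : Fin 5) : ℝ :=
  gB (T i j - T j i - brk l1 l2 l3 l4 m1 m2 (bv i) (bv j)) (bv k)

/-- Square norm ‖T‖² = g^{ip}g^{jq}g^{ks}T_{ijk}T_{pqs} of the torsion. -/
def torNorm (l1 l2 l3 l4 m1 m2 : ℝ) (T : Fin 5 → Fin 5 → V5) : ℝ :=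
  ∑ i, ∑ p, ∑ j, ∑ q, ∑ k, ∑ s,
    ginv i p * ginv j q * ginv k s *
      torC l1 l2 l3 l4 m1 m2 T i j k * torC l1 l2 l3 l4 m1 m2 T p q s

/-- Curvature vector L(eᵢ,e_j)e_k = D_{eᵢ}D_{e_j}e_k - D_{e_j}D_{eᵢ}e_k - D_{[eᵢ,e_j]}e_k. -/
def curvV (l1 l2 l3 l4 m1 m2 : ℝ) (T : Fin 5 → Fin 5 → V5) (i j k : Fin 5) : V5 :=
  ext T (bv i) (T j k) - ext T (bv j) (T i k) - ext T (brk l1 l2 l3 l4 m1 m2 (bv i) (bv j)) (bv k)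

/-- Curvature components L_{ijkl} = g(L(eᵢ,e_j)e_k, e_l). -/
def curvC (l1 l2 l3 l4 m1 m2 : ℝ) (T : Fin 5 → Fin 5 → V5) (i j k l : Fin 5) : ℝ :=
  gB (curvV l1 l2 l3 l4 m1 m2 T i j k) (bv l)

/-- Ricci tensor ρ(e_a,e_b) = g^{ij} L(eᵢ,e_a,e_b,e_j). -/
def ricci (l1 l2 l3 l4 m1 m2 : ℝ) (T : Fin 5 → Fin 5 → V5) (a b : Fin 5) : ℝ :=
  ∑ i, ∑ j, ginv i j * curvC l1 l2 l3 l4 m1 m2 T i a b j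

/-- Scalar curvature τ = g^{ab} ρ(e_a,e_b). -/
def scal (l1 l2 l3 l4 m1 m2 : ℝ) (T : Fin 5 → Fin 5 → V5) : ℝ :=
  ∑ a, ∑ b, ginv a b * ricci l1 l2 l3 l4 m1 m2 T a b

/-- Associated Ricci tensor ρ*(e_a,e_b) = g^{ij} L(eᵢ,e_a,e_b,φe_j). -/
def ricciStar (l1 l2 l3 l4 m1 m2 : ℝ) (T : Fin 5 → Fin 5 → V5) (a b : Fin 5) : ℝ :=
  ∑ i, ∑ j, ginv i j * gB (curvV l1 l2 l3 l4 m1 m2 T i a b) (phiV (bv j))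

/-- Associated scalar curvature τ* = g^{ab} ρ*(e_a,e_b). -/
def scalStar (l1 l2 l3 l4 m1 m2 : ℝ) (T : Fin 5 → Fin 5 → V5) : ℝ :=
  ∑ a, ∑ b, ginv a b * ricciStar l1 l2 l3 l4 m1 m2 T a b

/-- Sectional curvature of the basic 2-plane spanned by {eᵢ,e_j} w.r.t. a curvature tensor. -/
def secCurv (l1 l2 l3 l4 m1 m2 : ℝ) (T : Fin 5 → Fin 5 → V5) (i j : Fin 5) : ℝ :=
  curvC l1 l2 l3 l4 m1 m2 T i j j i /
    (gB (bv i) (bv i) * gB (bv j) (bv j) - (gB (bv i) (bv j))^2)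

/-- The Nijenhuis tensor on basis vectors:
N(e₁,e₂)=-N(e₃,e₄)=-4μ₁ξ, N(e₁,e₄)=-N(e₂,e₃)=-4μ₂ξ, other components zero. -/
def nijV (m1 m2 : ℝ) (i j : Fin 5) : V5 :=
  fun k => ((-4*m1) * brA (bv i) (bv j) + (-4*m2) * brB (bv i) (bv j)) * xiV k

/-- Square norm ‖N‖² = g^{ik}g^{js} g(N(eᵢ,e_j), N(e_k,e_s)). -/
def nijNorm (m1 m2 : ℝ) : ℝ :=
  ∑ i, ∑ k, ∑ j, ∑ s, ginv i k * ginv j s * gB (nijV m1 m2 i j) (nijV m1 m2 k s)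

/-- The tensor F(x,y,z) = g((∇ₓφ)y, z), with (∇ₓφ)y = ∇ₓ(φy) - φ(∇ₓy). -/
def Ften (l1 l2 l3 l4 m1 m2 : ℝ) (x y z : V5) : ℝ :=
  gB (ext (nablaTbl l1 l2 l3 l4 m1 m2) x (phiV y)
      - phiV (ext (nablaTbl l1 l2 l3 l4 m1 m2) x y)) z

/-- (G,φ,ξ,η,g) belongs to the class F₇:
F(x,y,z) = F(x,y,ξ)η(z) + F(x,z,ξ)η(y) and
F(x,y,ξ) = -F(y,x,ξ) = -F(φx,φy,ξ) for all x,y,z. -/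
theorem stmt5 (l1 l2 l3 l4 m1 m2 : ℝ) :
    (∀ x y z : V5,
      Ften l1 l2 l3 l4 m1 m2 x y z
        = Ften l1 l2 l3 l4 m1 m2 x y xiV * etaV z
        + Ften l1 l2 l3 l4 m1 m2 x z xiV * etaV y) ∧
    (∀ x y : V5,
      Ften l1 l2 l3 l4 m1 m2 x y xiV = - Ften l1 l2 l3 l4 m1 m2 y x xiV ∧
      Ften l1 l2 l3 l4 m1 m2 x y xiV
        = - Ften l1 l2 l3 l4 m1 m2 (phiV x) (phiV y) xiV) := by
  have ext_def : ∀ (T : Fin 5 → Fin 5 → V5) (x y : V5) (k : Fin 5),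
      ext T x y k = ∑ i, ∑ j, x i * y j * T i j k := fun _ _ _ _ => rfl
  refine ⟨fun x y z => ?_, fun x y => ⟨?_, ?_⟩⟩ <;>
  · simp only [Ften, gB, phiV, etaV, xiV, bv, nablaTbl, ext_def, Fin.sum_univ_five,
      Pi.sub_apply, Matrix.cons_val_zero, Matrix.cons_val_one, Matrix.head_cons,
      Matrix.cons_val_two, Matrix.tail_cons, Matrix.cons_val_three, Matrix.cons_val_four,
      Matrix.head_fin_const, Fin.isValue, show ((0:Fin 5)=4) = False by decide,
      show ((1:Fin 5)=4) = False by decide, show ((2:Fin 5)=4) = False by decide,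
      show ((3:Fin 5)=4) = False by decide, if_true, if_false, eq_self_iff_true]
    ring
end
end

section
/- The connection ∇ coincides with the φKT-connection D̈ (equivalently, all three natural connections coincide with ∇) if and only if μ₁=μ₂=0, i.e., if and only if (G,φ,ξ,η,g) is an F₀-manifold. -/
noncomputable section

open Finset

set_option maxHeartbeats 2000000 in
private lemma tbl_eq (l1 l2 l3 l4 : ℝ) :
    nablaTbl l1 l2 l3 l4 0 0 = ktTbl l1 l2 l3 l4 0 0 ∧
    nablaTbl l1 l2 l3 l4 0 0 = bTbl l1 l2 l3 l4 0 0 ∧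
    nablaTbl l1 l2 l3 l4 0 0 = cTbl l1 l2 l3 l4 0 0 := by
  refine ⟨?_, ?_, ?_⟩ <;>
  · funext i j k
    fin_cases i <;> fin_cases j <;> fin_cases k <;>
      norm_num [nablaTbl, ktTbl, bTbl, cTbl]

private lemma m_zero {l1 l2 l3 l4 m1 m2 : ℝ}
    (h : nablaTbl l1 l2 l3 l4 m1 m2 = ktTbl l1 l2 l3 l4 m1 m2) : m1 = 0 ∧ m2 = 0 := by
  have h1 := congrFun (congrFun (congrFun h 0) 1) 4
  have h2 := congrFun (congrFun (congrFun h 0) 3) 4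
  simp [nablaTbl, ktTbl] at h1 h2
  exact ⟨h1, h2⟩

/-- ∇ coincides with the φKT-connection D̈ (equivalently, all three
natural connections coincide with ∇) if and only if μ₁ = μ₂ = 0 (the F₀ case). -/
theorem stmt6 (l1 l2 l3 l4 m1 m2 : ℝ) :
    (nablaTbl l1 l2 l3 l4 m1 m2 = ktTbl l1 l2 l3 l4 m1 m2 ↔ (m1 = 0 ∧ m2 = 0)) ∧
    ((nablaTbl l1 l2 l3 l4 m1 m2 = ktTbl l1 l2 l3 l4 m1 m2 ∧
      nablaTbl l1 l2 l3 l4 m1 m2 = bTbl l1 l2 l3 l4 m1 m2 ∧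
      nablaTbl l1 l2 l3 l4 m1 m2 = cTbl l1 l2 l3 l4 m1 m2) ↔ (m1 = 0 ∧ m2 = 0)) := by
  constructor
  · constructor
    · exact m_zero
    · rintro ⟨rfl, rfl⟩; exact (tbl_eq l1 l2 l3 l4).1
  · constructor
    · rintro ⟨h, -, -⟩; exact m_zero h
    · rintro ⟨rfl, rfl⟩; exact tbl_eq l1 l2 l3 l4
end
end

section
/- The manifold (G,φ,ξ,η,g) is Einstein (ρ = (τ/5)g) if and only if μ₁μ₂ = -(λ₁λ₃+λ₂λ₄) and μ₁²-μ₂² = -(1/3)(λ₁²+λ₂²-λ₃²-λ₄²). -/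
noncomputable section

open Finset

set_option maxHeartbeats 2000000 in
lemma ric_val (l1 l2 l3 l4 m1 m2 : ℝ) (i j : Fin 5) :
    ricci l1 l2 l3 l4 m1 m2 (nablaTbl l1 l2 l3 l4 m1 m2) i j
      = ![![-2*(l1^2+l2^2-l3^2-l4^2)-2*(m1^2-m2^2), 0, -4*(l1*l3+l2*l4)-4*(m1*m2), 0, 0],
          ![0, -2*(l1^2+l2^2-l3^2-l4^2)-2*(m1^2-m2^2), 0, -4*(l1*l3+l2*l4)-4*(m1*m2), 0],
          ![-4*(l1*l3+l2*l4)-4*(m1*m2), 0, 2*(l1^2+l2^2-l3^2-l4^2)+2*(m1^2-m2^2), 0, 0],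
          ![0, -4*(l1*l3+l2*l4)-4*(m1*m2), 0, 2*(l1^2+l2^2-l3^2-l4^2)+2*(m1^2-m2^2), 0],
          ![0, 0, 0, 0, 4*(m1^2-m2^2)]] i j := by
  fin_cases i <;> fin_cases j <;>
    (simp [ricci, curvC, curvV, _root_.ext, gB, bv, brk, brA, brB, nablaTbl, ginv,
       Fin.sum_univ_five, Matrix.vecHead, Matrix.vecTail]; try ring)

lemma scal_val (l1 l2 l3 l4 m1 m2 : ℝ) :
    scal l1 l2 l3 l4 m1 m2 (nablaTbl l1 l2 l3 l4 m1 m2)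
      = -8*(l1^2+l2^2-l3^2-l4^2) - 4*(m1^2-m2^2) := by
  simp [scal, ric_val, ginv, gB, bv, Fin.sum_univ_five]
  ring

/-- the manifold is Einstein (ρ = (τ/5)g) iff
μ₁μ₂ = -(λ₁λ₃+λ₂λ₄) and μ₁²-μ₂² = -(1/3)(λ₁²+λ₂²-λ₃²-λ₄²). -/
theorem stmt10 (l1 l2 l3 l4 m1 m2 : ℝ) :
    (∀ i j : Fin 5,
      ricci l1 l2 l3 l4 m1 m2 (nablaTbl l1 l2 l3 l4 m1 m2) i j
        = (scal l1 l2 l3 l4 m1 m2 (nablaTbl l1 l2 l3 l4 m1 m2) / 5) * gmat i j)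
    ↔ (m1*m2 = -(l1*l3 + l2*l4) ∧
       m1^2 - m2^2 = -(1/3)*(l1^2 + l2^2 - l3^2 - l4^2)) := by
  constructor
  · intro h
    have h02 := h 0 2
    have h00 := h 0 0
    have h44 := h 4 4
    rw [ric_val, scal_val] at h02 h00 h44
    simp [gmat, gB, bv] at h02 h00 h44
    constructor <;> linarith
  · rintro ⟨h1, h2⟩ i j
    rw [ric_val, scal_val]
    fin_cases i <;> fin_cases j <;> simp [gmat, gB, bv, Matrix.vecHead, Matrix.vecTail] <;> linarith
end
end

section
/- On (G,φ,ξ,η,g) the φB-connection is the average of the φKT-connection and the φ-canonical connection: 2Ḋₓy = D̈ₓy + D⃛ₓy for all basis vectors x,y. -/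
noncomputable section

open Finset

/-- the φB-connection is the average of the φKT-connection and
the φ-canonical connection: 2Ḋₓy = D̈ₓy + D⃛ₓy on basis vectors. -/
theorem stmt14 (l1 l2 l3 l4 m1 m2 : ℝ) (i j : Fin 5) :
    (2 : ℝ) • bTbl l1 l2 l3 l4 m1 m2 i j
      = ktTbl l1 l2 l3 l4 m1 m2 i j + cTbl l1 l2 l3 l4 m1 m2 i j := by
  funext k
  fin_cases i <;> fin_cases j <;> fin_cases k <;>
    simp [bTbl, ktTbl, cTbl] <;> ring
end
end
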